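/- arXiv:2009.04468 — 6 statements merged into one kernel-verified Lean document; each statement's English description precedes it below -/
import Mathlib

section
/- Let V be a finite-dimensional complex inner product space of dimension n, and let S be a set of nonzero vectors in V such that the inner product ⟨u, v⟩ of any two distinct u, v ∈ S is a real number ≤ 0. Then |S| ≤ 2n. -/
open scoped InnerProductSpace

local notation "⟪" x ", " y "⟫" => @inner ℂ _ _ x y

open Module Submodule in
private lemma rc_im' (r : ℝ) : (@RCLike.ofReal ℂ _ r).im = 0 := rfl

private lemma rc_re' (r : ℝ) : (@RCLike.ofReal ℂ _ r).re = r := rfl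

open Module Submodule in
private lemma proj_inner {V : Type} [NormedAddCommGroup V] [InnerProductSpace ℂ V]
    [FiniteDimensional ℂ V] (v u w : V) :
    ⟪((orthogonalProjection (ℂ ∙ v)ᗮ u : V)), ((orthogonalProjection (ℂ ∙ v)ᗮ w : V))⟫
      = ⟪u, w⟫ - ⟪u, v⟫ * ⟪v, w⟫ / ((‖v‖ ^ 2 : ℝ) : ℂ) := by
  have hu : (orthogonalProjection (ℂ ∙ v) u : V) + (orthogonalProjection (ℂ ∙ v)ᗮ u : V) = u :=
    Submodule.starProjection_add_starProjection_orthogonal (K := ℂ ∙ v) u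
  have hw : (orthogonalProjection (ℂ ∙ v) w : V) + (orthogonalProjection (ℂ ∙ v)ᗮ w : V) = w :=
    Submodule.starProjection_add_starProjection_orthogonal (K := ℂ ∙ v) w
  have hs : ∀ x, (orthogonalProjection (ℂ ∙ v) x : V) = (⟪v, x⟫ / ((‖v‖ ^ 2 : ℝ) : ℂ)) • v :=
    fun x => Submodule.starProjection_singleton ℂ x
  set Pu := (orthogonalProjection (ℂ ∙ v)ᗮ u : V)
  set Pw := (orthogonalProjection (ℂ ∙ v)ᗮ w : V)
  set Qu := (orthogonalProjection (ℂ ∙ v) u : V) with hQu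
  set Qw := (orthogonalProjection (ℂ ∙ v) w : V) with hQw
  have h1 : ⟪Qu, Pw⟫ = 0 :=
    Submodule.inner_right_of_mem_orthogonal (orthogonalProjection (ℂ ∙ v) u).2
      (orthogonalProjection (ℂ ∙ v)ᗮ w).2
  have h2 : ⟪Pu, Qw⟫ = 0 := by
    rw [← inner_conj_symm]
    rw [Submodule.inner_right_of_mem_orthogonal (orthogonalProjection (ℂ ∙ v) w).2
      (orthogonalProjection (ℂ ∙ v)ᗮ u).2]
    simp
  have h3 : ⟪Qu, Qw⟫ = ⟪u, v⟫ * ⟪v, w⟫ / ((‖v‖ ^ 2 : ℝ) : ℂ) := by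
    rw [hQu, hQw, hs, hs,
      inner_smul_left, inner_smul_right, inner_self_eq_norm_sq_to_K]
    simp only [map_div₀, inner_conj_symm, Complex.conj_ofReal]
    push_cast
    rcases eq_or_ne v 0 with rfl | hv
    · simp
    · have hc : ((‖v‖ : ℂ)) ^ 2 ≠ 0 := by simp [hv]
      field_simp
      rw [show (‖v‖ : ℂ) ^ 4 = (‖v‖ : ℂ) ^ 2 * (‖v‖ : ℂ) ^ 2 by ring]
      exact mul_div_mul_right _ _ hc
  have hsum : ⟪u, w⟫ = ⟪Qu, Qw⟫ + ⟪Pu, Pw⟫ := by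
    conv_lhs => rw [← hu, ← hw]
    rw [inner_add_left, inner_add_right, inner_add_right, h1, h2]
    ring
  rw [hsum, h3]; ring

private lemma sign_helper (b c : ℂ) (a : ℂ) (r : ℝ) (hr : 0 < r) (ha : a.im = 0)
    (hb : b.im = 0) (hc : c.im = 0) (har : a.re ≤ 0) (hbr : b.re ≤ 0) (hcr : c.re ≤ 0) :
    (a - b * c / ((r : ℝ) : ℂ)).im = 0 ∧ (a - b * c / ((r : ℝ) : ℂ)).re ≤ 0 := by
  have ea : a = (a.re : ℂ) := by simp [Complex.ext_iff, ha]
  have eb : b = (b.re : ℂ) := by simp [Complex.ext_iff, hb]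
  have ec : c = (c.re : ℂ) := by simp [Complex.ext_iff, hc]
  rw [ea, eb, ec]
  have e : ((a.re : ℂ)) - (b.re : ℂ) * (c.re : ℂ) / ((r : ℝ) : ℂ)
      = ((a.re - b.re * c.re / r : ℝ) : ℂ) := by push_cast; ring
  rw [e]
  refine ⟨by simp, ?_⟩
  simp only [Complex.ofReal_re]
  have h0 : 0 ≤ b.re * c.re / r := div_nonneg (by nlinarith) hr.le
  linarith

open Module Submodule in
private lemma key (n : ℕ) : ∀ (V : Type) [NormedAddCommGroup V] [InnerProductSpace ℂ V]
    [FiniteDimensional ℂ V], finrank ℂ V ≤ n → ∀ (S : Finset V), (∀ v ∈ S, v ≠ 0) →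
    (∀ u ∈ S, ∀ w ∈ S, u ≠ w → (⟪u, w⟫).im = 0 ∧ (⟪u, w⟫).re ≤ 0) →
    S.card ≤ 2 * n := by
  induction n with
  | zero =>
    intro V _ _ _ hdim S hne h
    have h0 : finrank ℂ V = 0 := Nat.le_zero.mp hdim
    have : Subsingleton V := finrank_zero_iff.mp h0
    have : S = ∅ := Finset.eq_empty_of_forall_notMem fun v hv => hne v hv (Subsingleton.elim v 0)
    simp [this]
  | succ n IH =>
    intro V _ _ _ hdim S hne h
    classical
    rcases S.eq_empty_or_nonempty with rfl | ⟨v, hvS⟩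
    · simp
    have hv0 : v ≠ 0 := hne v hvS
    have hr : (0:ℝ) < ‖v‖ ^ 2 := pow_pos (norm_pos_iff.mpr hv0) 2
    have hvK : ∀ u : V, orthogonalProjection (ℂ ∙ v)ᗮ u = 0 ↔ u ∈ ℂ ∙ v := by
      intro u
      rw [Submodule.orthogonalProjectionOnto_eq_zero_iff, Submodule.orthogonal_orthogonal]
    set S₁ := S.filter (fun u => orthogonalProjection (ℂ ∙ v)ᗮ u = 0) with hS₁
    set S₂ := S.filter (fun u => ¬ orthogonalProjection (ℂ ∙ v)ᗮ u = 0) with hS₂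
    have hcard : S₁.card + S₂.card = S.card :=
      Finset.card_filter_add_card_filter_not _
    have hsymm : ∀ u ∈ S, u ≠ v → (⟪v, u⟫).im = 0 ∧ (⟪v, u⟫).re ≤ 0 := by
      intro u hu huv
      obtain ⟨hi, hre⟩ := h u hu v hvS huv
      have hcs : ⟪v, u⟫ = (starRingEnd ℂ) ⟪u, v⟫ := by rw [inner_conj_symm]
      refine ⟨?_, ?_⟩
      · rw [hcs, Complex.conj_im, hi, neg_zero]
      · rw [hcs, Complex.conj_re]; exact hre
    have hspan : ∀ u ∈ S₁, u ≠ v → ∃ c : ℝ, c < 0 ∧ u = (c : ℂ) • v := by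
      intro u hu huv
      obtain ⟨hu', hP⟩ := Finset.mem_filter.mp hu
      obtain ⟨c, hc⟩ := Submodule.mem_span_singleton.mp ((hvK u).mp hP)
      have hiv := h u hu' v hvS huv
      rw [← hc, inner_smul_left, inner_self_eq_norm_sq_to_K] at hiv
      simp only [Complex.mul_im, Complex.mul_re, Complex.conj_re, Complex.conj_im] at hiv
      norm_cast at hiv
      simp only [rc_im', rc_re'] at hiv
      obtain ⟨h1, h2⟩ := hiv
      have hc0 : c ≠ 0 := fun e => hne u hu' (by rw [← hc, e, zero_smul])
      have him : c.im = 0 := by nlinarith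
      have hrne : c.re ≠ 0 := fun e => hc0 (Complex.ext e him)
      refine ⟨c.re, lt_of_le_of_ne (by nlinarith) hrne, ?_⟩
      rw [← hc]
      congr 1
      simp [Complex.ext_iff, him]
    have hvmem : v ∈ S₁ :=
      Finset.mem_filter.mpr ⟨hvS, (hvK v).mpr (Submodule.mem_span_singleton_self v)⟩
    have claim1 : S₁.card ≤ 2 := by
      have herase : (S₁.erase v).card ≤ 1 := by
        rw [Finset.card_le_one]
        intro a ha b hb
        by_contra hab
        obtain ⟨hav, ha'⟩ := Finset.mem_erase.mp ha
        obtain ⟨hbv, hb'⟩ := Finset.mem_erase.mp hb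
        obtain ⟨c, hcneg, hceq⟩ := hspan a ha' hav
        obtain ⟨d, hdneg, hdeq⟩ := hspan b hb' hbv
        have hab' := (h a (Finset.mem_filter.mp ha').1 b (Finset.mem_filter.mp hb').1 hab).2
        rw [hceq, hdeq, inner_smul_left, inner_smul_right, inner_self_eq_norm_sq_to_K] at hab'
        simp only [Complex.conj_ofReal, Complex.mul_re, Complex.mul_im, Complex.ofReal_re,
          Complex.ofReal_im] at hab'
        norm_cast at hab'
        simp only [rc_im', rc_re'] at hab'
        nlinarith [mul_pos_of_neg_of_neg hcneg hdneg]
      have := Finset.card_erase_add_one hvmem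
      omega
    have hmemS₂ : ∀ u ∈ S₂, u ∈ S ∧ u ≠ v ∧ orthogonalProjection (ℂ ∙ v)ᗮ u ≠ 0 := by
      intro u hu
      obtain ⟨hu', hP⟩ := Finset.mem_filter.mp hu
      refine ⟨hu', fun e => hP ?_, hP⟩
      rw [e]
      exact (hvK v).mpr (Submodule.mem_span_singleton_self v)
    have hproj : ∀ u ∈ S₂, ∀ w ∈ S₂, u ≠ w →
        (⟪(orthogonalProjection (ℂ ∙ v)ᗮ u : V), (orthogonalProjection (ℂ ∙ v)ᗮ w : V)⟫).im = 0 ∧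
        (⟪(orthogonalProjection (ℂ ∙ v)ᗮ u : V), (orthogonalProjection (ℂ ∙ v)ᗮ w : V)⟫).re ≤ 0 := by
      intro u hu w hw huw
      obtain ⟨huS, huv, -⟩ := hmemS₂ u hu
      obtain ⟨hwS, hwv, -⟩ := hmemS₂ w hw
      rw [proj_inner v u w]
      obtain ⟨h1i, h1r⟩ := h u huS w hwS huw
      obtain ⟨h2i, h2r⟩ := h u huS v hvS huv
      obtain ⟨h3i, h3r⟩ := hsymm w hwS hwv
      exact sign_helper _ _ _ _ hr h1i h2i h3i h1r h2r h3r
    have hinj : Set.InjOn (fun u => orthogonalProjection (ℂ ∙ v)ᗮ u) S₂ := by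
      intro u hu w hw he
      by_contra huw
      have hle := (hproj u (by simpa using hu) w (by simpa using hw) huw).2
      simp only at he
      rw [he] at hle
      have hwne : (orthogonalProjection (ℂ ∙ v)ᗮ w : V) ≠ 0 := by
        have h2 := (hmemS₂ w (by simpa using hw)).2.2
        exact fun e => h2 (Submodule.coe_eq_zero.mp e)
      have hself : (⟪(orthogonalProjection (ℂ ∙ v)ᗮ w : V), (orthogonalProjection (ℂ ∙ v)ᗮ w : V)⟫).re
          = ‖(orthogonalProjection (ℂ ∙ v)ᗮ w : V)‖ ^ 2 := by
        rw [inner_self_eq_norm_sq_to_K]; norm_cast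
      nlinarith [pow_pos (norm_pos_iff.mpr hwne) 2]
    set T : Finset (ℂ ∙ v)ᗮ := S₂.image (fun u => orthogonalProjection (ℂ ∙ v)ᗮ u) with hT
    have hTcard : T.card = S₂.card := Finset.card_image_of_injOn hinj
    have hfr : finrank ℂ (ℂ ∙ v)ᗮ ≤ n := by
      have h1 := Submodule.finrank_add_finrank_orthogonal (K := ℂ ∙ v)
      rw [finrank_span_singleton hv0] at h1
      omega
    have claim2 : T.card ≤ 2 * n := by
      apply IH (ℂ ∙ v)ᗮ hfr T
      · intro x hx
        obtain ⟨u, hu, rfl⟩ := Finset.mem_image.mp hx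
        exact (hmemS₂ u hu).2.2
      · intro x hx y hy hxy
        obtain ⟨u, hu, rfl⟩ := Finset.mem_image.mp hx
        obtain ⟨w, hw, rfl⟩ := Finset.mem_image.mp hy
        have huw : u ≠ w := fun e => hxy (by rw [e])
        have hpp := hproj u hu w hw huw
        simp only [Submodule.coe_inner]
        exact hpp
    omega

theorem stmt0 (n : ℕ) (S : Finset (EuclideanSpace ℂ (Fin n)))
    (hne : ∀ v ∈ S, v ≠ 0)
    (h : ∀ u ∈ S, ∀ v ∈ S, u ≠ v → (⟪u, v⟫).im = 0 ∧ (⟪u, v⟫).re ≤ 0) :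
    S.card ≤ 2 * n := by
  exact key n (EuclideanSpace ℂ (Fin n)) (by simp) S hne h
end

section
/- Suppose ψ is a unit vector, {a_i}, {f_j} are orthonormal bases of a d-dimensional complex Hilbert space, no a_i is parallel to any f_j, and all KD quasiprobabilities q_{ij} = ⟨f_j|a_i⟩⟨a_i|ψ⟩⟨ψ|f_j⟩ are nonnegative reals. Let N_A = #{i : ⟨a_i|ψ⟩ ≠ 0} and N_F = #{j : ⟨f_j|ψ⟩ ≠ 0}. Then 2N_A + 2N_F ≤ 3d. -/
/-!
Let `q i j = ⟪f j, a i⟫ ⟪a i, ψ⟫ ⟪ψ, f j⟫` and join `i` to `j` in a bipartite graph when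
`q i j ≠ 0`; its non-isolated vertices are the `N_A + N_F` indices where `ψ` has a nonzero
coefficient. Let `v` be orthogonal to the `a i` and `f j` on which `ψ` has zero coefficient.
The ratios `x i = ⟪a i, v⟫ / ⟪a i, ψ⟫` and `y j = ⟪f j, v⟫ / ⟪f j, ψ⟫` satisfy
`∑ j, q i j (x i - y j) = 0 = ∑ i, q i j (x i - y j)`, so, `q` being nonnegative, the energy
`∑ q i j ‖x i - y j‖²` vanishes and the ratios are constant on connected components.
Hence these vectors together with one `f j` per component span the space, which gives
`N_A + N_F ≤ d + c` for `c` components. Since no `a i` is parallel to an `f j`, no component is a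
single edge, so every component has at least three vertices and `3 c ≤ N_A + N_F`.
-/

open scoped InnerProductSpace ComplexOrder

local notation "⟪" x ", " y "⟫" => @inner ℂ _ _ x y

open Finset

section Harmonic

variable {ι κ : Type*} [Fintype ι] [Fintype κ]

theorem eq_of_sum_mul_sub_eq_zero {W : ι → κ → ℂ} (hW : ∀ i j, 0 ≤ W i j) {x : ι → ℂ}
    {y : κ → ℂ} (hx : ∀ i, ∑ j, W i j * (x i - y j) = 0)
    (hy : ∀ j, ∑ i, W i j * (x i - y j) = 0) {i : ι} {j : κ} (hij : W i j ≠ 0) :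
    x i = y j := by
  have hterm : ∀ i j, 0 ≤ W i j * ((x i - y j) * star (x i - y j)) := fun i j =>
    mul_nonneg (hW i j) (mul_star_self_nonneg _)
  have henergy : ∑ i, ∑ j, W i j * ((x i - y j) * star (x i - y j)) = 0 :=
    calc _ = ∑ i, (∑ j, W i j * (x i - y j)) * star (x i)
            - ∑ j, (∑ i, W i j * (x i - y j)) * star (y j) := by
          simp only [sum_mul]
          rw [sum_comm (f := fun j i => W i j * (x i - y j) * star (y j)), ← sum_sub_distrib]
          refine sum_congr rfl fun i _ => ?_
          rw [← sum_sub_distrib]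
          refine sum_congr rfl fun j _ => ?_
          rw [star_sub]
          ring
      _ = 0 := by simp only [hx, hy, zero_mul, sum_const_zero, sub_self]
  rw [Fintype.sum_eq_zero_iff_of_nonneg fun i => sum_nonneg fun j _ => hterm i j] at henergy
  have hij' := congrFun ((Fintype.sum_eq_zero_iff_of_nonneg (hterm i)).1 (congrFun henergy i)) j
  rw [Pi.zero_apply, mul_eq_zero, or_iff_right hij, CStarRing.mul_star_self_eq_zero_iff] at hij'
  exact sub_eq_zero.1 hij'

end Harmonic

namespace SimpleGraph

variable {V : Type*} {G : SimpleGraph V}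

theorem Reachable.apply_eq_of_adj {α : Sort*} {φ : V → α} (hφ : ∀ v w, G.Adj v w → φ v = φ w)
    {v w : V} (h : G.Reachable v w) : φ v = φ w := by
  obtain ⟨p⟩ := h
  induction p with
  | nil => rfl
  | cons hadj _ ih => exact (hφ _ _ hadj).trans ih

theorem three_mul_card_image_connectedComponentMk_le [DecidableEq V]
    [DecidableEq G.ConnectedComponent] (s : Finset V) (hs : ∀ v ∈ s, ∃ w, G.Adj v w)
    (hsupp : ∀ v w, G.Adj v w → v ∈ s)
    (hedge : ∀ v w, G.Adj v w → ∃ u, u ≠ v ∧ u ≠ w ∧ (G.Adj v u ∨ G.Adj w u)) :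
    3 * #(s.image G.connectedComponentMk) ≤ #s := by
  refine mul_card_image_le_card s 3 fun C hC => ?_
  obtain ⟨v, hv, rfl⟩ := mem_image.1 hC
  obtain ⟨w, hvw⟩ := hs v hv
  obtain ⟨u, huv, huw, hu⟩ := hedge v w hvw
  have hvu : G.Reachable v u := hu.elim Adj.reachable fun h => hvw.reachable.trans h.reachable
  have hsub : {v, w, u} ⊆ {x ∈ s | G.connectedComponentMk x = G.connectedComponentMk v} := by
    simp only [insert_subset_iff, singleton_subset_iff, mem_filter, ConnectedComponent.eq]
    exact ⟨⟨hv, trivial⟩, ⟨hsupp w v hvw.symm, hvw.reachable.symm⟩,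
      ⟨hu.elim (hsupp u v ·.symm) (hsupp u w ·.symm), hvu.symm⟩⟩
  calc 3 = #{v, w, u} := (card_eq_three.2 ⟨v, w, u, hvw.ne, huv.symm, huw.symm, rfl⟩).symm
    _ ≤ _ := card_le_card hsub

end SimpleGraph

theorem finrank_le_card_of_forall_inner_eq_zero {𝕜 E : Type*} [RCLike 𝕜] [NormedAddCommGroup E]
    [InnerProductSpace 𝕜 E] (S : Finset E) (h : ∀ v, (∀ u ∈ S, inner 𝕜 u v = 0) → v = 0) :
    Module.finrank 𝕜 E ≤ #S := by
  have hspan : Submodule.span 𝕜 (S : Set E) = ⊤ := by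
    refine Submodule.orthogonal_eq_bot_iff.1 ((Submodule.eq_bot_iff _).2 fun v hv => h v ?_)
    exact fun u hu => Submodule.inner_right_of_mem_orthogonal (Submodule.subset_span hu) hv
  rw [← finrank_top, ← hspan]
  exact finrank_span_finset_le_card S

def bipartiteSupportGraph {ι κ M : Type*} [Zero M] (W : ι → κ → M) : SimpleGraph (ι ⊕ κ) where
  Adj
    | .inl i, .inr j => W i j ≠ 0
    | .inr j, .inl i => W i j ≠ 0
    | _, _ => False
  symm := ⟨by rintro (_ | _) (_ | _) h <;> exact h⟩
  loopless := ⟨by rintro (_ | _) h <;> exact h⟩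

section KirkwoodDirac

variable {ι E : Type*} [Fintype ι] [NormedAddCommGroup E] [InnerProductSpace ℂ E]
  (a f : OrthonormalBasis ι ℂ E) (ψ : E)

noncomputable def kdQuasiprob (i j : ι) : ℂ := ⟪f j, a i⟫ * ⟪a i, ψ⟫ * ⟪ψ, f j⟫

theorem sum_kdQuasiprob_right (i : ι) : ∑ j, kdQuasiprob a f ψ i j = ⟪a i, ψ⟫ * ⟪ψ, a i⟫ := by
  rw [← f.sum_inner_mul_inner ψ (a i), mul_sum]
  exact sum_congr rfl fun j _ => by unfold kdQuasiprob; ring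

theorem sum_kdQuasiprob_left (j : ι) : ∑ i, kdQuasiprob a f ψ i j = ⟪ψ, f j⟫ * ⟪f j, ψ⟫ := by
  rw [← a.sum_inner_mul_inner (f j) ψ, mul_sum]
  exact sum_congr rfl fun i _ => by unfold kdQuasiprob; ring

variable {a f ψ}

theorem inner_ne_zero_of_kdQuasiprob_ne_zero {i j : ι} (h : kdQuasiprob a f ψ i j ≠ 0) :
    ⟪a i, ψ⟫ ≠ 0 ∧ ⟪f j, ψ⟫ ≠ 0 := by
  unfold kdQuasiprob at h
  rw [← inner_conj_symm ψ (f j)] at h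
  simp only [mul_ne_zero_iff, map_ne_zero] at h
  exact ⟨h.1.2, h.2⟩

theorem eq_of_kdQuasiprob_ne_zero (hq : ∀ i j, 0 ≤ kdQuasiprob a f ψ i j) {v : E}
    {x y : ι → ℂ} (hx : ∀ i, ⟪a i, v⟫ = x i * ⟪a i, ψ⟫) (hy : ∀ j, ⟪f j, v⟫ = y j * ⟪f j, ψ⟫)
    {i j : ι} (hij : kdQuasiprob a f ψ i j ≠ 0) : x i = y j := by
  refine eq_of_sum_mul_sub_eq_zero hq (fun i => ?_) (fun j => ?_) hij
  · have hxsum : ∑ j, kdQuasiprob a f ψ i j * x i = ⟪ψ, a i⟫ * ⟪a i, v⟫ := by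
      rw [← sum_mul, sum_kdQuasiprob_right, hx]
      ring
    -- `kdQuasiprob` is real, so it equals its conjugate `⟪a i, f j⟫ * ⟪ψ, a i⟫ * ⟪f j, ψ⟫`.
    have hysum : ∑ j, kdQuasiprob a f ψ i j * y j = ⟪ψ, a i⟫ * ⟪a i, v⟫ := by
      rw [← f.sum_inner_mul_inner (a i) v, mul_sum]
      refine sum_congr rfl fun j _ => ?_
      rw [← (hq i j).isSelfAdjoint.star_eq, hy]
      simp only [kdQuasiprob, star_mul', Complex.star_def, inner_conj_symm]
      ring
    simp only [mul_sub, sum_sub_distrib, hxsum, hysum, sub_self]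
  · have hxsum : ∑ i, kdQuasiprob a f ψ i j * x i = ⟪ψ, f j⟫ * ⟪f j, v⟫ := by
      rw [← a.sum_inner_mul_inner (f j) v, mul_sum]
      refine sum_congr rfl fun i _ => ?_
      rw [hx]
      unfold kdQuasiprob
      ring
    have hysum : ∑ i, kdQuasiprob a f ψ i j * y j = ⟪ψ, f j⟫ * ⟪f j, v⟫ := by
      rw [← sum_mul, sum_kdQuasiprob_left, hy]
      ring
    simp only [mul_sub, sum_sub_distrib, hxsum, hysum, sub_self]

variable (f) in
theorem exists_kdQuasiprob_ne_zero_right {i : ι} (hi : ⟪a i, ψ⟫ ≠ 0) :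
    ∃ j, kdQuasiprob a f ψ i j ≠ 0 := by
  refine exists_ne_zero_of_sum_ne_zero (s := univ) ?_ |>.imp fun _ => And.right
  rw [sum_kdQuasiprob_right, ← inner_conj_symm ψ (a i)]
  exact mul_ne_zero hi (map_ne_zero _ |>.2 hi)

variable (a) in
theorem exists_kdQuasiprob_ne_zero_left {j : ι} (hj : ⟪f j, ψ⟫ ≠ 0) :
    ∃ i, kdQuasiprob a f ψ i j ≠ 0 := by
  refine exists_ne_zero_of_sum_ne_zero (s := univ) ?_ |>.imp fun _ => And.right
  rw [sum_kdQuasiprob_left, ← inner_conj_symm ψ (f j)]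
  exact mul_ne_zero (map_ne_zero _ |>.2 hj) hj

theorem exists_other_kdQuasiprob_ne_zero {i j : ι} (hpar : ‖⟪a i, f j⟫‖ < 1)
    (hij : kdQuasiprob a f ψ i j ≠ 0) :
    (∃ j' ≠ j, kdQuasiprob a f ψ i j' ≠ 0) ∨ ∃ i' ≠ i, kdQuasiprob a f ψ i' j ≠ 0 := by
  -- Otherwise the row and column sums give `q i j = ‖⟪a i, ψ⟫‖ ^ 2 = ‖⟪f j, ψ⟫‖ ^ 2`,
  -- which forces `‖⟪a i, f j⟫‖ = 1`.
  by_contra! h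
  have hrow := sum_kdQuasiprob_right a f ψ i
  have hcol := sum_kdQuasiprob_left a f ψ j
  rw [Fintype.sum_eq_single j h.1] at hrow
  rw [Fintype.sum_eq_single i h.2] at hcol
  have hrow' := congrArg norm hrow
  have hcol' := congrArg norm hcol
  simp only [norm_mul, norm_inner_symm ψ] at hrow' hcol'
  have hprod : ‖kdQuasiprob a f ψ i j‖ = ‖⟪a i, f j⟫‖ * (‖⟪a i, ψ⟫‖ * ‖⟪f j, ψ⟫‖) := by
    simp only [kdQuasiprob, norm_mul, norm_inner_symm, mul_assoc]
  have hnorm : ‖⟪a i, ψ⟫‖ * ‖⟪f j, ψ⟫‖ = ‖kdQuasiprob a f ψ i j‖ := by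
    rw [← sq_eq_sq₀ (by positivity) (norm_nonneg _), mul_pow, sq, sq, ← hrow', ← hcol', sq]
  rw [hnorm] at hprod
  nlinarith [norm_pos_iff.2 hij]

variable (a f ψ) in
noncomputable def kdGraph : SimpleGraph (ι ⊕ ι) := bipartiteSupportGraph (kdQuasiprob a f ψ)

theorem kdGraph_exists_adj_of_adj (hpar : ∀ i j, ‖⟪a i, f j⟫‖ < 1) {v w : ι ⊕ ι}
    (h : (kdGraph a f ψ).Adj v w) :
    ∃ u, u ≠ v ∧ u ≠ w ∧ ((kdGraph a f ψ).Adj v u ∨ (kdGraph a f ψ).Adj w u) := by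
  have key : ∀ i j, kdQuasiprob a f ψ i j ≠ 0 → ∃ u, u ≠ .inl i ∧ u ≠ .inr j ∧
      ((kdGraph a f ψ).Adj (.inl i) u ∨ (kdGraph a f ψ).Adj (.inr j) u) := by
    intro i j hij
    rcases exists_other_kdQuasiprob_ne_zero (hpar i j) hij with
      ⟨j', hj', hq⟩ | ⟨i', hi', hq⟩
    · exact ⟨.inr j', Sum.inr_ne_inl, by simpa using hj', .inl hq⟩
    · exact ⟨.inl i', by simpa using hi', Sum.inl_ne_inr, .inr hq⟩
  rcases v with i | j <;> rcases w with i' | j'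
  · exact h.elim
  · exact key i j' h
  · obtain ⟨u, hu₁, hu₂, hu⟩ := key i' j h
    exact ⟨u, hu₂, hu₁, hu.symm⟩
  · exact h.elim

theorem card_le_card_add_card_add_card_of_reachable (hq : ∀ i j, 0 ≤ kdQuasiprob a f ψ i j)
    (R : Finset ι)
    (hR : ∀ i, ⟪a i, ψ⟫ ≠ 0 → ∃ j ∈ R, (kdGraph a f ψ).Reachable (.inl i) (.inr j)) :
    Fintype.card ι ≤ #{i | ⟪a i, ψ⟫ = 0} + #{j | ⟪f j, ψ⟫ = 0} + #R := by
  classical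
  let S := ({i | ⟪a i, ψ⟫ = 0} : Finset ι).image a ∪ (({j | ⟪f j, ψ⟫ = 0} : Finset ι) ∪ R).image f
  suffices h : ∀ v, (∀ u ∈ S, ⟪u, v⟫ = 0) → v = 0 by
    calc Fintype.card ι = Module.finrank ℂ E := (Module.finrank_eq_card_basis a.toBasis).symm
      _ ≤ #S := finrank_le_card_of_forall_inner_eq_zero S h
      _ ≤ _ := (card_union_le _ _).trans <| add_le_add card_image_le <|
          card_image_le.trans (card_union_le _ _)
      _ = _ := (add_assoc _ _ _).symm
  intro v hv
  have ha : ∀ i, ⟪a i, ψ⟫ = 0 → ⟪a i, v⟫ = 0 := fun i hi =>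
    hv _ (mem_union_left _ (mem_image_of_mem _ (by simpa using hi)))
  have hf : ∀ j, ⟪f j, ψ⟫ = 0 ∨ j ∈ R → ⟪f j, v⟫ = 0 := fun j hj =>
    hv _ (mem_union_right _ (mem_image_of_mem _ (by simpa using hj)))
  let x i := ⟪a i, v⟫ / ⟪a i, ψ⟫
  let y j := ⟪f j, v⟫ / ⟪f j, ψ⟫
  have hxy : ∀ p q, (kdGraph a f ψ).Adj p q → Sum.elim x y p = Sum.elim x y q := by
    have h : ∀ i j, kdQuasiprob a f ψ i j ≠ 0 → x i = y j := fun i j =>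
      eq_of_kdQuasiprob_ne_zero hq (fun i => (div_mul_cancel_of_imp (ha i)).symm)
        (fun j => (div_mul_cancel_of_imp fun h => hf j (.inl h)).symm)
    rintro (i | j) (i' | j') hadj
    exacts [hadj.elim, h i j' hadj, (h i' j hadj).symm, hadj.elim]
  refine InnerProductSpace.ext_inner_left_basis a.toBasis fun i => ?_
  rw [OrthonormalBasis.coe_toBasis, inner_zero_right]
  by_cases hi : ⟪a i, ψ⟫ = 0
  · exact ha i hi
  obtain ⟨j, hj, hreach⟩ := hR i hi
  have hxi : x i = y j := hreach.apply_eq_of_adj hxy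
  rw [← div_mul_cancel₀ ⟪a i, v⟫ hi]
  simp [x, hxi, y, hf j (.inr hj)]

variable (a f ψ) in
noncomputable def kdSupport : Finset (ι ⊕ ι) :=
  ({i | ⟪a i, ψ⟫ ≠ 0} : Finset ι).disjSum {j | ⟪f j, ψ⟫ ≠ 0}

open Classical in
theorem three_mul_card_image_kdGraph_connectedComponentMk_le (hpar : ∀ i j, ‖⟪a i, f j⟫‖ < 1) :
    3 * #((kdSupport a f ψ).image (kdGraph a f ψ).connectedComponentMk) ≤ #(kdSupport a f ψ) := by
  refine (kdGraph a f ψ).three_mul_card_image_connectedComponentMk_le _ ?_ ?_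
    (fun _ _ => kdGraph_exists_adj_of_adj hpar)
  · rintro (i | j) hv <;> simp only [kdSupport, inl_mem_disjSum, inr_mem_disjSum, mem_filter] at hv
    · obtain ⟨j, hj⟩ := exists_kdQuasiprob_ne_zero_right f hv.2
      exact ⟨.inr j, hj⟩
    · obtain ⟨i, hi⟩ := exists_kdQuasiprob_ne_zero_left a hv.2
      exact ⟨.inl i, hi⟩
  · rintro (i | j) (i' | j') hadj
    exacts [hadj.elim, by simpa [kdSupport] using (inner_ne_zero_of_kdQuasiprob_ne_zero hadj).1,
      by simpa [kdSupport] using (inner_ne_zero_of_kdQuasiprob_ne_zero hadj).2, hadj.elim]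

theorem two_mul_card_add_two_mul_card_le (hpar : ∀ i j, ‖⟪a i, f j⟫‖ < 1)
    (hq : ∀ i j, 0 ≤ kdQuasiprob a f ψ i j) :
    2 * #{i | ⟪a i, ψ⟫ ≠ 0} + 2 * #{j | ⟪f j, ψ⟫ ≠ 0} ≤ 3 * Fintype.card ι := by
  classical
  let G := kdGraph a f ψ
  have hsurj : Set.SurjOn (fun j => G.connectedComponentMk (.inr j)) Set.univ
      ((kdSupport a f ψ).image G.connectedComponentMk) := by
    intro C hC
    obtain ⟨i | j, hv, rfl⟩ := mem_image.1 hC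
    · obtain ⟨j, hj⟩ := exists_kdQuasiprob_ne_zero_right f (by simpa [kdSupport] using hv)
      exact ⟨j, trivial, SimpleGraph.ConnectedComponent.eq.2 (SimpleGraph.Adj.reachable hj).symm⟩
    · exact ⟨j, trivial, rfl⟩
  obtain ⟨R, -, hRinj, hRimg⟩ := exists_subset_injOn_image_eq_of_surjOn _ _ hsurj
  have hdim := card_le_card_add_card_add_card_of_reachable hq R fun i hi => by
    obtain ⟨j, hj, hij⟩ := mem_image.1 (hRimg ▸ mem_image_of_mem G.connectedComponentMk
      (show Sum.inl i ∈ kdSupport a f ψ by simpa [kdSupport] using hi))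
    exact ⟨j, hj, (SimpleGraph.ConnectedComponent.eq.1 hij).symm⟩
  have hcomp := three_mul_card_image_kdGraph_connectedComponentMk_le (ψ := ψ) hpar
  rw [← hRimg, card_image_of_injOn hRinj, kdSupport, card_disjSum] at hcomp
  have hA : #{i | ⟪a i, ψ⟫ = 0} + #{i | ⟪a i, ψ⟫ ≠ 0} = Fintype.card ι :=
    card_filter_add_card_filter_not _
  have hF : #{j | ⟪f j, ψ⟫ = 0} + #{j | ⟪f j, ψ⟫ ≠ 0} = Fintype.card ι :=
    card_filter_add_card_filter_not _
  omega

end KirkwoodDirac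

theorem stmt7_general (d : ℕ)
    (a f : OrthonormalBasis (Fin d) ℂ (EuclideanSpace ℂ (Fin d)))
    (ψ : EuclideanSpace ℂ (Fin d))
    (hpar : ∀ i j, ‖⟪a i, f j⟫‖ < 1)
    (hclassical : ∀ i j, 0 ≤ ⟪f j, a i⟫ * ⟪a i, ψ⟫ * ⟪ψ, f j⟫) :
    2 * (Finset.univ.filter fun i => ⟪a i, ψ⟫ ≠ 0).card +
      2 * (Finset.univ.filter fun j => ⟪f j, ψ⟫ ≠ 0).card ≤ 3 * d := by
  simpa using two_mul_card_add_two_mul_card_le hpar hclassical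

theorem stmt7 (d : ℕ)
    (a f : OrthonormalBasis (Fin d) ℂ (EuclideanSpace ℂ (Fin d)))
    (ψ : EuclideanSpace ℂ (Fin d)) (hψ : ‖ψ‖ = 1)
    (hpar : ∀ i j, ‖⟪a i, f j⟫‖ < 1)
    (hclassical : ∀ i j, 0 ≤ ⟪f j, a i⟫ * ⟪a i, ψ⟫ * ⟪ψ, f j⟫) :
    2 * (Finset.univ.filter fun i => ⟪a i, ψ⟫ ≠ 0).card +
      2 * (Finset.univ.filter fun j => ⟪f j, ψ⟫ ≠ 0).card ≤ 3 * d :=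
  stmt7_general d a f ψ hpar hclassical
end

section
/- Suppose ψ is a unit vector, {a_i}, {f_j} orthonormal bases of ℂ^d, and all KD quasiprobabilities q_{ij} = ⟨f_j|a_i⟩⟨a_i|ψ⟩⟨ψ|f_j⟩ are nonnegative reals. Let n_∥ (resp. n̄_∥) be the number of a_i parallel to some f_j and nonorthogonal (resp. orthogonal) to ψ, and N_A, N_F the numbers of a_i, f_j nonorthogonal to ψ. Then 2N_A + 2N_F ≤ 3d + n_∥ − 3 n̄_∥. -/
open scoped InnerProductSpace ComplexOrder

local notation "⟪" x ", " y "⟫" => @inner ℂ _ _ x y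

/-!
Write `α i = ⟪a i, ψ⟫` and `β j = ⟪f j, ψ⟫`. Classicality makes the KD distribution `q` a
nonnegative matrix with marginals `|α i|²` and `|β j|²`. Hence, for `v` in the intersection `V`
of the spans of the `a i` and of the `f j` that overlap `ψ`, the ratios `⟪a i, v⟫ / α i` and
`⟪f j, v⟫ / β j` are `q`-harmonic on the bipartite graph with edges `q i j ≠ 0`, so they are
constant on its connected components ("blocks") and `dim V ≤ #blocks`. Conversely `V` contains the
orthogonal complement of the `f j` with `β j = 0` and of the `r = d - N_A - n̄_∥` non-parallel `a i`
with `α i = 0`, so `N_F - r ≤ dim V`. Finally a block has either two vertices `a i`, or a single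
parallel one, or a single non-parallel one, and then its vectors `f j` carry at least one unit of
weight on those `r` vectors `a i`; hence `2 · #blocks ≤ N_A + n_∥ + r`.
-/

open Finset

theorem eq_of_sum_smul_sub_eq_zero {ι κ F : Type*} [Fintype ι] [Fintype κ]
    [NormedAddCommGroup F] [InnerProductSpace ℝ F] {W : ι → κ → ℝ} (hW : ∀ i j, 0 ≤ W i j)
    {p : ι → F} {q : κ → F} (hp : ∀ i, ∑ j, W i j • (p i - q j) = 0)
    (hq : ∀ j, ∑ i, W i j • (q j - p i) = 0) {i : ι} {j : κ} (hij : W i j ≠ 0) :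
    p i = q j := by
  have hsplit : ∀ i j, W i j * ‖p i - q j‖ ^ 2
      = ⟪p i, W i j • (p i - q j)⟫_ℝ + ⟪q j, W i j • (q j - p i)⟫_ℝ := by
    intro i j
    rw [real_inner_smul_right, real_inner_smul_right, ← mul_add, ← real_inner_self_eq_norm_sq,
      ← neg_sub (p i), inner_neg_right, ← sub_eq_add_neg, ← inner_sub_left]
  have hzero : ∑ i, ∑ j, W i j * ‖p i - q j‖ ^ 2 = 0 := by
    simp_rw [hsplit, sum_add_distrib, ← inner_sum, hp, inner_zero_right, sum_const_zero, zero_add]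
    rw [sum_comm]
    simp_rw [← inner_sum, hq, inner_zero_right, sum_const_zero]
  have hnn : ∀ i j, 0 ≤ W i j * ‖p i - q j‖ ^ 2 := fun i j => by have := hW i j; positivity
  have hrow := (sum_eq_zero_iff_of_nonneg fun i _ => sum_nonneg fun j _ => hnn i j).mp hzero i
    (mem_univ _)
  have hterm := (sum_eq_zero_iff_of_nonneg fun j _ => hnn i j).mp hrow j (mem_univ _)
  rwa [mul_eq_zero, or_iff_right hij, sq_eq_zero_iff, norm_eq_zero, sub_eq_zero] at hterm

theorem inner_eq_zero_iff_of_norm_inner_eq_one {𝕜 E : Type*} [RCLike 𝕜] [NormedAddCommGroup E]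
    [InnerProductSpace 𝕜 E] {u w : E} (hu : ‖u‖ = 1) (hw : ‖w‖ = 1) (h : ‖⟪u, w⟫_𝕜‖ = 1)
    (y : E) : ⟪w, y⟫_𝕜 = 0 ↔ ⟪u, y⟫_𝕜 = 0 := by
  have hu0 : u ≠ 0 := by rintro rfl; simp at hu
  have hw0 : w ≠ 0 := by rintro rfl; simp at hw
  obtain ⟨r, hr, rfl⟩ := (norm_inner_eq_norm_iff hu0 hw0).mp (by rw [h, hu, hw, one_mul])
  rw [inner_smul_left, mul_eq_zero, or_iff_right (by simpa using hr)]

theorem OrthonormalBasis.sum_inner_mul_inner_mul_sub_div {ι E : Type*} [Fintype ι]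
    [NormedAddCommGroup E] [InnerProductSpace ℂ E] (b : OrthonormalBasis ι ℂ E) {ψ v : E}
    (hv : ∀ i, ⟪b i, ψ⟫ = 0 → ⟪b i, v⟫ = 0) (w : E) (z : ℂ) :
    ∑ i, ⟪w, b i⟫ * ⟪b i, ψ⟫ * (z - ⟪b i, v⟫ / ⟪b i, ψ⟫) = ⟪w, ψ⟫ * z - ⟪w, v⟫ := by
  have h : ∀ i, ⟪w, b i⟫ * ⟪b i, ψ⟫ * (z - ⟪b i, v⟫ / ⟪b i, ψ⟫)
      = ⟪w, b i⟫ * ⟪b i, ψ⟫ * z - ⟪w, b i⟫ * ⟪b i, v⟫ := fun i => by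
    rw [mul_sub, mul_assoc _ _ (_ / _), mul_div_cancel_of_imp' (hv i)]
  simp_rw [h, sum_sub_distrib, ← sum_mul, b.sum_inner_mul_inner]

namespace KirkwoodDirac

noncomputable section

variable {ι E : Type*} [Fintype ι] [NormedAddCommGroup E] [InnerProductSpace ℂ E]
  (a f : OrthonormalBasis ι ℂ E) (ψ : E)

/-- The Kirkwood–Dirac quasiprobability `q_{ij}`. -/
def kd (i j : ι) : ℂ := ⟪f j, a i⟫ * ⟪a i, ψ⟫ * ⟪ψ, f j⟫

/-- The intersection of the spans of the `a i` and of the `f j` that are not orthogonal to `ψ`. -/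
def jointSupport : Submodule ℂ E where
  carrier := {v | (∀ i, ⟪a i, ψ⟫ = 0 → ⟪a i, v⟫ = 0) ∧ ∀ j, ⟪f j, ψ⟫ = 0 → ⟪f j, v⟫ = 0}
  add_mem' hu hv := ⟨fun i hi => by simp [hu.1 i hi, hv.1 i hi],
    fun j hj => by simp [hu.2 j hj, hv.2 j hj]⟩
  zero_mem' := ⟨fun _ _ => inner_zero_right _, fun _ _ => inner_zero_right _⟩
  smul_mem' c v hv := ⟨fun i hi => by simp [hv.1 i hi],
    fun j hj => by simp [hv.2 j hj]⟩

/-- The bipartite graph on the `a i` (as `.inl i`) and the `f j` (as `.inr j`) with an edge where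
`q_{ij} ≠ 0`; its connected components are the blocks `Quot (kdRel a f ψ)`. -/
def kdRel : ι ⊕ ι → ι ⊕ ι → Prop
  | .inl i, .inr j => kd a f ψ i j ≠ 0
  | _, _ => False

def block (u : ι ⊕ ι) : Quot (kdRel a f ψ) := Quot.mk _ u

instance : DecidableEq (Quot (kdRel a f ψ)) := Classical.decEq _

def blocks : Finset (Quot (kdRel a f ψ)) :=
  (univ.filter fun i => ⟪a i, ψ⟫ ≠ 0).image fun i => block a f ψ (.inl i)

def blockA (t : Quot (kdRel a f ψ)) : Finset ι :=
  (univ.filter fun i => ⟪a i, ψ⟫ ≠ 0).filter fun i => block a f ψ (.inl i) = t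

def blockF (t : Quot (kdRel a f ψ)) : Finset ι :=
  (univ.filter fun j => ⟪f j, ψ⟫ ≠ 0).filter fun j => block a f ψ (.inr j) = t

def leakage (t : Quot (kdRel a f ψ)) : ℝ :=
  ∑ j ∈ blockF a f ψ t, ∑ i ∈ univ.filter (fun i => ⟪a i, ψ⟫ = 0), ‖⟪a i, f j⟫‖ ^ 2

def ratio (v : E) (u : ι ⊕ ι) : ℂ := ⟪Sum.elim a f u, v⟫ / ⟪Sum.elim a f u, ψ⟫

variable {a f ψ}

theorem ratio_eq_of_kd_ne_zero (hcl : ∀ i j, 0 ≤ kd a f ψ i j) {v : E}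
    (hv : v ∈ jointSupport a f ψ) {i j : ι} (h : kd a f ψ i j ≠ 0) :
    ⟪a i, v⟫ / ⟪a i, ψ⟫ = ⟪f j, v⟫ / ⟪f j, ψ⟫ := by
  have hre : ∀ i j, ((kd a f ψ i j).re : ℂ) = kd a f ψ i j := fun i j =>
    (Complex.eq_re_of_ofReal_le (by rw [Complex.ofReal_zero]; exact hcl i j)).symm
  -- `kd` is real, so it equals its complex conjugate
  have hconj : ∀ i j, kd a f ψ i j = ⟪ψ, a i⟫ * (⟪a i, f j⟫ * ⟪f j, ψ⟫) := fun i j => by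
    rw [← Complex.conj_eq_iff_re.mpr (hre i j), kd]
    simp only [map_mul, inner_conj_symm]
    ring
  refine eq_of_sum_smul_sub_eq_zero (W := fun i j => (kd a f ψ i j).re)
    (p := fun i => ⟪a i, v⟫ / ⟪a i, ψ⟫) (q := fun j => ⟪f j, v⟫ / ⟪f j, ψ⟫)
    (fun i j => by simpa using (Complex.le_def.mp (hcl i j)).1) (fun k => ?_) (fun l => ?_)
    (fun h0 => h (by rw [← hre, h0, Complex.ofReal_zero]))
  · simp_rw [Complex.real_smul, hre, hconj, mul_assoc ⟪ψ, a k⟫, ← mul_sum]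
    rw [f.sum_inner_mul_inner_mul_sub_div hv.2, mul_div_cancel_of_imp' (hv.1 k), sub_self,
      mul_zero]
  · simp_rw [Complex.real_smul, hre, kd, mul_comm _ ⟪ψ, f l⟫, mul_assoc ⟪ψ, f l⟫, ← mul_sum]
    rw [a.sum_inner_mul_inner_mul_sub_div hv.1, mul_div_cancel_of_imp' (hv.2 l), sub_self,
      mul_zero]

theorem ratio_eq_of_block_eq (hcl : ∀ i j, 0 ≤ kd a f ψ i j) {v : E}
    (hv : v ∈ jointSupport a f ψ) {u w : ι ⊕ ι} (h : block a f ψ u = block a f ψ w) :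
    ratio a f ψ v u = ratio a f ψ v w := by
  have hresp : ∀ u w, kdRel a f ψ u w → ratio a f ψ v u = ratio a f ψ v w := by
    rintro (i | i) (j | j) h
    exacts [h.elim, ratio_eq_of_kd_ne_zero hcl hv h, h.elim, h.elim]
  exact congrArg (Quot.lift _ hresp) h

theorem finrank_jointSupport_le_card_blocks (hcl : ∀ i j, 0 ≤ kd a f ψ i j) :
    Module.finrank ℂ (jointSupport a f ψ) ≤ (blocks a f ψ).card := by
  -- `Φ v` lists the value of `ratio v` on each block; it determines `v`
  let Φ : jointSupport a f ψ →ₗ[ℂ] (blocks a f ψ → ℂ) :=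
    (LinearMap.pi fun t => (⟪Sum.elim a f t.1.out, ψ⟫)⁻¹ • innerₛₗ ℂ (Sum.elim a f t.1.out)) ∘ₗ
      (jointSupport a f ψ).subtype
  have hΦ : ∀ v t, Φ v t = ratio a f ψ v t.1.out := fun v t => by
    simp [Φ, ratio, div_eq_inv_mul]
  have hinj : Function.Injective Φ := by
    refine (injective_iff_map_eq_zero Φ).mpr fun v hv0 => Subtype.ext ?_
    refine InnerProductSpace.ext_inner_left_basis a.toBasis fun i => ?_
    rw [a.coe_toBasis, ZeroMemClass.coe_zero, inner_zero_right]
    by_cases hi : ⟪a i, ψ⟫ = 0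
    · exact v.2.1 i hi
    · have ht : block a f ψ (.inl i) ∈ blocks a f ψ := mem_image_of_mem _ (by simpa using hi)
      have h0 := congrFun hv0 ⟨_, ht⟩
      rw [hΦ, ← ratio_eq_of_block_eq (u := .inl i) hcl v.2 (Quot.out_eq _).symm] at h0
      simpa [ratio, hi] using h0
  simpa using LinearMap.finrank_le_finrank_of_injective hinj

theorem card_le_finrank_jointSupport_add :
    (univ.filter fun j => ⟪f j, ψ⟫ ≠ 0).card ≤ Module.finrank ℂ (jointSupport a f ψ) +
      (univ.filter fun i => ⟪a i, ψ⟫ = 0 ∧ ¬∃ j, ‖⟪a i, f j⟫‖ = 1).card := by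
  classical
  have := Module.Finite.of_basis a.toBasis
  set R := univ.filter fun i => ⟪a i, ψ⟫ = 0 ∧ ¬∃ j, ‖⟪a i, f j⟫‖ = 1
  set ZF := univ.filter fun j => ⟪f j, ψ⟫ = 0
  set s : Finset E := ZF.image f ∪ R.image a
  have hle : (Submodule.span ℂ (s : Set E))ᗮ ≤ jointSupport a f ψ := by
    intro v hv
    have hs : ∀ u ∈ s, ⟪u, v⟫ = 0 := fun u hu =>
      Submodule.inner_right_of_mem_orthogonal (Submodule.subset_span hu) hv
    have hF : ∀ j, ⟪f j, ψ⟫ = 0 → ⟪f j, v⟫ = 0 := fun j hj =>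
      hs _ (mem_union_left _ (mem_image_of_mem _ (by simpa [ZF] using hj)))
    refine ⟨fun i hi => ?_, hF⟩
    by_cases hpar : ∃ k, ‖⟪a i, f k⟫‖ = 1
    · -- `a i` is a multiple of some `f k`, which is then orthogonal to `ψ`
      obtain ⟨k, hk⟩ := hpar
      have hik := inner_eq_zero_iff_of_norm_inner_eq_one (a.norm_eq_one i) (f.norm_eq_one k) hk
      exact (hik v).mp (hF k ((hik ψ).mpr hi))
    · exact hs _ (mem_union_right _ (mem_image_of_mem _ (by simpa [R, hi] using hpar)))
  have hdim := Submodule.finrank_add_finrank_orthogonal (Submodule.span ℂ (s : Set E))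
  rw [Module.finrank_eq_card_basis a.toBasis] at hdim
  have hspan : Module.finrank ℂ (Submodule.span ℂ (s : Set E)) ≤ s.card :=
    finrank_span_finset_le_card s
  have hs : s.card ≤ ZF.card + R.card :=
    (card_union_le _ _).trans (add_le_add card_image_le card_image_le)
  have hZF : (univ.filter fun j => ⟪f j, ψ⟫ ≠ 0).card + ZF.card = Fintype.card ι := by
    rw [add_comm, ← card_univ]; exact card_filter_add_card_filter_not _
  have := Submodule.finrank_mono hle
  omega

theorem mem_blockA {t : Quot (kdRel a f ψ)} {i : ι} :
    i ∈ blockA a f ψ t ↔ ⟪a i, ψ⟫ ≠ 0 ∧ block a f ψ (.inl i) = t := by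
  simp [blockA]

theorem mem_blockF {t : Quot (kdRel a f ψ)} {j : ι} :
    j ∈ blockF a f ψ t ↔ ⟪f j, ψ⟫ ≠ 0 ∧ block a f ψ (.inr j) = t := by
  simp [blockF]

theorem inner_eq_zero_of_block_ne {i j : ι} (hi : ⟪a i, ψ⟫ ≠ 0) (hj : ⟪f j, ψ⟫ ≠ 0)
    (h : block a f ψ (.inl i) ≠ block a f ψ (.inr j)) : ⟪f j, a i⟫ = 0 := by
  by_contra hij
  exact h (Quot.sound (mul_ne_zero (mul_ne_zero hij hi) fun h0 => hj (inner_eq_zero_symm.mp h0)))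

section SingleVertexBlock

variable {t : Quot (kdRel a f ψ)} {x : ι}

theorem inner_eq_zero_of_blockA_eq_singleton (hx : blockA a f ψ t = {x}) {i j : ι}
    (hj : j ∈ blockF a f ψ t) (hi : ⟪a i, ψ⟫ ≠ 0) (hix : i ≠ x) : ⟪f j, a i⟫ = 0 := by
  refine inner_eq_zero_of_block_ne hi (mem_blockF.mp hj).1 fun h => hix ?_
  rw [← mem_singleton, ← hx, mem_blockA]
  exact ⟨hi, h.trans (mem_blockF.mp hj).2⟩

theorem sum_blockF_norm_inner_sq_eq_one (hx : blockA a f ψ t = {x}) :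
    ∑ j ∈ blockF a f ψ t, ‖⟪a x, f j⟫‖ ^ 2 = 1 := by
  obtain ⟨hxψ, hxt⟩ := mem_blockA.mp (hx ▸ mem_singleton_self x)
  have hβ : ∀ j ∈ blockF a f ψ t, ⟪f j, ψ⟫ = ⟪f j, a x⟫ * ⟪a x, ψ⟫ := fun j hj => by
    rw [← a.sum_inner_mul_inner, sum_eq_single x _ (by simp)]
    intro i _ hix
    by_cases hi : ⟪a i, ψ⟫ = 0
    · rw [hi, mul_zero]
    · rw [inner_eq_zero_of_blockA_eq_singleton hx hj hi hix, zero_mul]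
  have hα : ⟪a x, ψ⟫ = ((∑ j ∈ blockF a f ψ t, ‖⟪a x, f j⟫‖ ^ 2 : ℝ) : ℂ) * ⟪a x, ψ⟫ := by
    calc ⟪a x, ψ⟫ = ∑ j, ⟪a x, f j⟫ * ⟪f j, ψ⟫ := (f.sum_inner_mul_inner _ _).symm
      _ = ∑ j ∈ blockF a f ψ t, ⟪a x, f j⟫ * ⟪f j, ψ⟫ := by
        refine (sum_subset (subset_univ _) fun j _ hj => ?_).symm
        by_cases hjψ : ⟪f j, ψ⟫ = 0
        · rw [hjψ, mul_zero]
        · have hne : block a f ψ (.inl x) ≠ block a f ψ (.inr j) := fun h =>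
            hj (mem_blockF.mpr ⟨hjψ, h.symm.trans hxt⟩)
          rw [inner_eq_zero_symm.mp (inner_eq_zero_of_block_ne hxψ hjψ hne), zero_mul]
      _ = _ := by
        push_cast
        rw [sum_mul]
        refine sum_congr rfl fun j hj => ?_
        rw [hβ j hj, ← mul_assoc, ← inner_conj_symm (f j) (a x), Complex.mul_conj']
  have h1 := (mul_eq_right₀ hxψ).mp hα.symm
  exact_mod_cast h1

theorem sum_filter_norm_inner_sq_eq_one_sub (hx : blockA a f ψ t = {x}) {j : ι}
    (hj : j ∈ blockF a f ψ t) :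
    ∑ i ∈ univ.filter (fun i => ⟪a i, ψ⟫ = 0), ‖⟪a i, f j⟫‖ ^ 2 = 1 - ‖⟪a x, f j⟫‖ ^ 2 := by
  have hxψ := (mem_blockA.mp (hx ▸ mem_singleton_self x)).1
  have hsupp : ∑ i ∈ univ.filter (fun i => ¬⟪a i, ψ⟫ = 0), ‖⟪a i, f j⟫‖ ^ 2
      = ‖⟪a x, f j⟫‖ ^ 2 := by
    refine sum_eq_single_of_mem x (by simpa using hxψ) fun i hi hix => ?_
    rw [inner_eq_zero_symm.mp (inner_eq_zero_of_blockA_eq_singleton hx hj (by simpa using hi) hix),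
      norm_zero, sq, zero_mul]
  have htot := a.sum_sq_norm_inner_right (f j)
  rw [f.norm_eq_one, one_pow, ← sum_filter_add_sum_filter_not univ (fun i => ⟪a i, ψ⟫ = 0),
    hsupp] at htot
  linarith

theorem one_le_leakage (hx : blockA a f ψ t = {x}) (hpar : ¬∃ j, ‖⟪a x, f j⟫‖ = 1) :
    1 ≤ leakage a f ψ t := by
  have hsum := sum_blockF_norm_inner_sq_eq_one hx
  have hlt : ∀ j ∈ blockF a f ψ t, ‖⟪a x, f j⟫‖ ^ 2 < 1 := fun j _ => by
    have hle : ‖⟪a x, f j⟫‖ ≤ 1 := by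
      simpa [a.norm_eq_one, f.norm_eq_one] using norm_inner_le_norm (𝕜 := ℂ) (a x) (f j)
    exact pow_lt_one₀ (norm_nonneg _) (hle.lt_of_ne fun h => hpar ⟨j, h⟩) two_ne_zero
  have hcard : (1 : ℝ) < (blockF a f ψ t).card :=
    calc (1 : ℝ) = ∑ j ∈ blockF a f ψ t, ‖⟪a x, f j⟫‖ ^ 2 := hsum.symm
      _ < ∑ j ∈ blockF a f ψ t, (1 : ℝ) :=
        sum_lt_sum_of_nonempty (nonempty_of_sum_ne_zero (by rw [hsum]; exact one_ne_zero)) hlt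
      _ = (blockF a f ψ t).card := by simp
  have hcard2 : (2 : ℝ) ≤ (blockF a f ψ t).card := by
    exact_mod_cast (show 2 ≤ (blockF a f ψ t).card by exact_mod_cast hcard)
  have hleak : leakage a f ψ t = (blockF a f ψ t).card - 1 := by
    rw [leakage, sum_congr rfl fun j hj => sum_filter_norm_inner_sq_eq_one_sub hx hj,
      sum_sub_distrib, hsum, sum_const, nsmul_one]
  linarith

end SingleVertexBlock

theorem two_le_card_blockA_add_leakage {t : Quot (kdRel a f ψ)} (ht : t ∈ blocks a f ψ) :
    (2 : ℝ) ≤ (blockA a f ψ t).card +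
      (if ∃ i ∈ blockA a f ψ t, ∃ j, ‖⟪a i, f j⟫‖ = 1 then 1 else 0) + leakage a f ψ t := by
  obtain ⟨x, hxψ, rfl⟩ := mem_image.mp ht
  have hxA : x ∈ blockA a f ψ (block a f ψ (.inl x)) := mem_blockA.mpr ⟨by simpa using hxψ, rfl⟩
  have hleak : 0 ≤ leakage a f ψ (block a f ψ (.inl x)) :=
    sum_nonneg fun _ _ => sum_nonneg fun _ _ => sq_nonneg _
  have hind : (0 : ℝ) ≤ if ∃ i ∈ blockA a f ψ (block a f ψ (.inl x)), ∃ j, ‖⟪a i, f j⟫‖ = 1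
      then 1 else 0 := by
    split_ifs <;> norm_num
  by_cases h2 : 2 ≤ (blockA a f ψ (block a f ψ (.inl x))).card
  · have : (2 : ℝ) ≤ (blockA a f ψ (block a f ψ (.inl x))).card := by exact_mod_cast h2
    linarith
  have hx : blockA a f ψ (block a f ψ (.inl x)) = {x} :=
    eq_singleton_iff_unique_mem.mpr ⟨hxA, fun y hy => card_le_one.mp (by omega) y hy x hxA⟩
  rw [hx, card_singleton, Nat.cast_one]
  by_cases hpar : ∃ j, ‖⟪a x, f j⟫‖ = 1
  · rw [if_pos ⟨x, mem_singleton_self x, hpar⟩]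
    linarith
  · rw [if_neg (by simpa using hpar)]
    linarith [one_le_leakage hx hpar]

theorem sum_leakage_le : ∑ t ∈ blocks a f ψ, leakage a f ψ t ≤
    (univ.filter fun i => ⟪a i, ψ⟫ = 0 ∧ ¬∃ j, ‖⟪a i, f j⟫‖ = 1).card := by
  calc ∑ t ∈ blocks a f ψ, leakage a f ψ t
      = ∑ j ∈ (univ.filter fun j => ⟪f j, ψ⟫ ≠ 0).filter
          (fun j => block a f ψ (.inr j) ∈ blocks a f ψ),
          ∑ i ∈ univ.filter (fun i => ⟪a i, ψ⟫ = 0), ‖⟪a i, f j⟫‖ ^ 2 :=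
        sum_fiberwise_eq_sum_filter _ _ _ _
    _ ≤ ∑ j ∈ univ.filter fun j => ⟪f j, ψ⟫ ≠ 0,
          ∑ i ∈ univ.filter (fun i => ⟪a i, ψ⟫ = 0), ‖⟪a i, f j⟫‖ ^ 2 :=
        sum_le_sum_of_subset_of_nonneg (filter_subset _ _) fun _ _ _ =>
          sum_nonneg fun _ _ => sq_nonneg _
    _ = ∑ i ∈ univ.filter (fun i => ⟪a i, ψ⟫ = 0),
          ∑ j ∈ univ.filter fun j => ⟪f j, ψ⟫ ≠ 0, ‖⟪a i, f j⟫‖ ^ 2 := sum_comm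
    _ ≤ ∑ i ∈ univ.filter (fun i => ⟪a i, ψ⟫ = 0),
          if ∃ j, ‖⟪a i, f j⟫‖ = 1 then (0 : ℝ) else 1 := sum_le_sum fun i hi => ?_
    _ = _ := by rw [sum_ite, sum_const_zero, zero_add, sum_const, nsmul_one, filter_filter]
  have hi : ⟪a i, ψ⟫ = 0 := (mem_filter.mp hi).2
  by_cases hpar : ∃ k, ‖⟪a i, f k⟫‖ = 1
  · -- `a i` is a multiple of some `f k`, and `f k` is orthogonal to `ψ`
    rw [if_pos hpar]
    obtain ⟨k, hk⟩ := hpar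
    have hik := inner_eq_zero_iff_of_norm_inner_eq_one (a.norm_eq_one i) (f.norm_eq_one k) hk
    refine (sum_eq_zero fun j hj => ?_).le
    have hkj : k ≠ j := fun h => (mem_filter.mp hj).2 (h ▸ (hik ψ).mpr hi)
    rw [(hik (f j)).mp (f.orthonormal.2 hkj), norm_zero, sq, zero_mul]
  · rw [if_neg hpar]
    calc _ ≤ ∑ j, ‖⟪a i, f j⟫‖ ^ 2 :=
          sum_le_sum_of_subset_of_nonneg (subset_univ _) fun _ _ _ => sq_nonneg _
      _ = 1 := by rw [f.sum_sq_norm_inner_left, a.norm_eq_one, one_pow]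

theorem two_mul_card_blocks_le :
    2 * (blocks a f ψ).card ≤ (univ.filter fun i => ⟪a i, ψ⟫ ≠ 0).card +
      (univ.filter fun i => (∃ j, ‖⟪a i, f j⟫‖ = 1) ∧ ⟪a i, ψ⟫ ≠ 0).card +
      (univ.filter fun i => ⟪a i, ψ⟫ = 0 ∧ ¬∃ j, ‖⟪a i, f j⟫‖ = 1).card := by
  have hA : ∑ t ∈ blocks a f ψ, (blockA a f ψ t).card = (univ.filter fun i => ⟪a i, ψ⟫ ≠ 0).card :=
    (card_eq_sum_card_image _ _).symm
  have hpar : ((blocks a f ψ).filter fun t => ∃ i ∈ blockA a f ψ t, ∃ j, ‖⟪a i, f j⟫‖ = 1).card ≤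
      (univ.filter fun i => (∃ j, ‖⟪a i, f j⟫‖ = 1) ∧ ⟪a i, ψ⟫ ≠ 0).card := by
    refine card_le_card_of_surjOn (fun i => block a f ψ (.inl i)) fun t ht => ?_
    obtain ⟨-, i, hi, hpar⟩ := mem_filter.mp ht
    obtain ⟨hiψ, rfl⟩ := mem_blockA.mp hi
    exact ⟨i, by simp [hpar, hiψ], rfl⟩
  have hsum := sum_le_sum fun t ht => two_le_card_blockA_add_leakage (a := a) (f := f) (ψ := ψ) ht
  rw [sum_add_distrib, sum_add_distrib, sum_boole, ← Nat.cast_sum, hA, sum_const, nsmul_eq_mul]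
    at hsum
  have hleak := sum_leakage_le (a := a) (f := f) (ψ := ψ)
  have hpar' : (((blocks a f ψ).filter fun t => ∃ i ∈ blockA a f ψ t,
      ∃ j, ‖⟪a i, f j⟫‖ = 1).card : ℝ) ≤
      (univ.filter fun i => (∃ j, ‖⟪a i, f j⟫‖ = 1) ∧ ⟪a i, ψ⟫ ≠ 0).card := by
    exact_mod_cast hpar
  have : (2 * (blocks a f ψ).card : ℝ) ≤ (univ.filter fun i => ⟪a i, ψ⟫ ≠ 0).card +
      (univ.filter fun i => (∃ j, ‖⟪a i, f j⟫‖ = 1) ∧ ⟪a i, ψ⟫ ≠ 0).card +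
      (univ.filter fun i => ⟪a i, ψ⟫ = 0 ∧ ¬∃ j, ‖⟪a i, f j⟫‖ = 1).card := by
    linarith
  exact_mod_cast this

theorem two_mul_card_supports_le (hcl : ∀ i j, 0 ≤ kd a f ψ i j) :
    2 * (univ.filter fun i => ⟪a i, ψ⟫ ≠ 0).card + 2 * (univ.filter fun j => ⟪f j, ψ⟫ ≠ 0).card +
      3 * (univ.filter fun i => (∃ j, ‖⟪a i, f j⟫‖ = 1) ∧ ⟪a i, ψ⟫ = 0).card ≤
      3 * Fintype.card ι + (univ.filter fun i => (∃ j, ‖⟪a i, f j⟫‖ = 1) ∧ ⟪a i, ψ⟫ ≠ 0).card := by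
  have hcount : (univ.filter fun i => ⟪a i, ψ⟫ ≠ 0).card +
      (univ.filter fun i => (∃ j, ‖⟪a i, f j⟫‖ = 1) ∧ ⟪a i, ψ⟫ = 0).card +
      (univ.filter fun i => ⟪a i, ψ⟫ = 0 ∧ ¬∃ j, ‖⟪a i, f j⟫‖ = 1).card = Fintype.card ι := by
    rw [← card_univ, ← card_filter_add_card_filter_not (s := univ) (fun i => ⟪a i, ψ⟫ = 0),
      ← card_filter_add_card_filter_not (s := univ.filter fun i => ⟪a i, ψ⟫ = 0)
        (fun i => ∃ j, ‖⟪a i, f j⟫‖ = 1), filter_filter, filter_filter]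
    simp only [and_comm, ne_eq]
    omega
  have hlower := card_le_finrank_jointSupport_add (a := a) (f := f) (ψ := ψ)
  have hupper := finrank_jointSupport_le_card_blocks hcl
  have hblocks := two_mul_card_blocks_le (a := a) (f := f) (ψ := ψ)
  omega

end

end KirkwoodDirac

theorem stmt8_general (d : ℕ)
    (a f : OrthonormalBasis (Fin d) ℂ (EuclideanSpace ℂ (Fin d)))
    (ψ : EuclideanSpace ℂ (Fin d))
    (hclassical : ∀ i j, 0 ≤ ⟪f j, a i⟫ * ⟪a i, ψ⟫ * ⟪ψ, f j⟫)
    (NA NF npar nbarpar : ℕ)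
    (hNA : NA = (Finset.univ.filter fun i => ⟪a i, ψ⟫ ≠ 0).card)
    (hNF : NF = (Finset.univ.filter fun j => ⟪f j, ψ⟫ ≠ 0).card)
    (hnpar : npar =
      (Finset.univ.filter fun i => (∃ j, ‖⟪a i, f j⟫‖ = 1) ∧ ⟪a i, ψ⟫ ≠ 0).card)
    (hnbarpar : nbarpar =
      (Finset.univ.filter fun i => (∃ j, ‖⟪a i, f j⟫‖ = 1) ∧ ⟪a i, ψ⟫ = 0).card) :
    (2 * NA + 2 * NF : ℤ) ≤ 3 * d + npar - 3 * nbarpar := by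
  have h : 2 * NA + 2 * NF + 3 * nbarpar ≤ 3 * d + npar := by
    subst hNA hNF hnpar hnbarpar
    convert KirkwoodDirac.two_mul_card_supports_le hclassical
    exact (Fintype.card_fin d).symm
  omega

theorem stmt8 (d : ℕ)
    (a f : OrthonormalBasis (Fin d) ℂ (EuclideanSpace ℂ (Fin d)))
    (ψ : EuclideanSpace ℂ (Fin d)) (hψ : ‖ψ‖ = 1)
    (hclassical : ∀ i j, 0 ≤ ⟪f j, a i⟫ * ⟪a i, ψ⟫ * ⟪ψ, f j⟫)
    (NA NF npar nbarpar : ℕ)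
    (hNA : NA = (Finset.univ.filter fun i => ⟪a i, ψ⟫ ≠ 0).card)
    (hNF : NF = (Finset.univ.filter fun j => ⟪f j, ψ⟫ ≠ 0).card)
    (hnpar : npar =
      (Finset.univ.filter fun i => (∃ j, ‖⟪a i, f j⟫‖ = 1) ∧ ⟪a i, ψ⟫ ≠ 0).card)
    (hnbarpar : nbarpar =
      (Finset.univ.filter fun i => (∃ j, ‖⟪a i, f j⟫‖ = 1) ∧ ⟪a i, ψ⟫ = 0).card) :
    (2 * NA + 2 * NF : ℤ) ≤ 3 * d + npar - 3 * nbarpar :=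
  stmt8_general d a f ψ hclassical NA NF npar nbarpar hNA hNF hnpar hnbarpar
end

section
/- With notation as in the k = 2 maximum-nonclassicality bound, Σ_{i,j} |⟨f_j|a_i⟩||⟨a_i|ψ⟩||⟨ψ|f_j⟩| = √d holds if and only if |⟨f_j|a_i⟩| = 1/√d for all i, j (the bases are mutually unbiased) and |⟨a_i|ψ⟩| = |⟨f_j|ψ⟩| = 1/√d for all i, j. -/
/-!
Write `M i j = |⟨f_j|a_i⟩|`, `X i = |⟨a_i|ψ⟩|`, `Y j = |⟨ψ|f_j⟩|` and `s = √d`. By Parseval the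
squares of the entries of `M` sum to `1` along every row and every column, and
`∑ X i ^ 2 = ∑ Y j ^ 2 = 1`. Expanding
`∑ i j, (M i j - s X i Y j) ^ 2 = 2d - 2s ∑ i j, M i j X i Y j` shows that the sum equals `s`
exactly when `M` is the rank-one matrix `s X Yᵀ`; its row and column sums then force
`s X i = s Y j = 1`.
-/

open scoped InnerProductSpace BigOperators

local notation "⟪" x ", " y "⟫" => @inner ℂ _ _ x y

section RankOne

variable {ι κ : Type*} [Fintype ι] [Fintype κ] (M : ι → κ → ℝ) (X : ι → ℝ) (Y : κ → ℝ)

lemma sum_sum_sq_sub_mul_mul (c : ℝ) :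
    ∑ i, ∑ j, (M i j - c * X i * Y j) ^ 2 =
      ∑ i, ∑ j, M i j ^ 2 - 2 * c * ∑ i, ∑ j, M i j * X i * Y j +
        c ^ 2 * ((∑ i, X i ^ 2) * ∑ j, Y j ^ 2) := by
  rw [Finset.sum_mul_sum]
  simp only [Finset.mul_sum, ← Finset.sum_sub_distrib, ← Finset.sum_add_distrib]
  refine Finset.sum_congr rfl fun i _ => Finset.sum_congr rfl fun j _ => ?_
  ring

lemma eq_mul_mul_of_sum_sum_mul_mul_eq {c : ℝ} (hM : ∑ i, ∑ j, M i j ^ 2 = c ^ 2)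
    (hX : ∑ i, X i ^ 2 = 1) (hY : ∑ j, Y j ^ 2 = 1) (h : ∑ i, ∑ j, M i j * X i * Y j = c)
    (i : ι) (j : κ) : M i j = c * X i * Y j := by
  have hzero : ∑ i, ∑ j, (M i j - c * X i * Y j) ^ 2 = 0 := by
    rw [sum_sum_sq_sub_mul_mul, hM, hX, hY, h]
    ring
  have hsq := (Fintype.sum_eq_zero_iff_of_nonneg fun j => sq_nonneg _).mp <|
    congrFun ((Fintype.sum_eq_zero_iff_of_nonneg fun i =>
      Fintype.sum_nonneg fun j => sq_nonneg _).mp hzero) i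
  exact sub_eq_zero.mp (pow_eq_zero_iff two_ne_zero |>.mp (congrFun hsq j))

variable {Y} in
lemma eq_one_of_sum_sq_mul_eq_one {x : ℝ} (hx : 0 ≤ x) (hY : ∑ j, Y j ^ 2 = 1)
    (h : ∑ j, (x * Y j) ^ 2 = 1) : x = 1 := by
  simp_rw [mul_pow, ← Finset.mul_sum, hY, mul_one] at h
  exact (pow_eq_one_iff_of_nonneg hx two_ne_zero).mp h

theorem sum_sum_mul_mul_eq_sqrt_card_iff (hX₀ : ∀ i, 0 ≤ X i) (hY₀ : ∀ j, 0 ≤ Y j)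
    (hrow : ∀ i, ∑ j, M i j ^ 2 = 1) (hcol : ∀ j, ∑ i, M i j ^ 2 = 1)
    (hX : ∑ i, X i ^ 2 = 1) (hY : ∑ j, Y j ^ 2 = 1) :
    ∑ i, ∑ j, M i j * X i * Y j = √(Fintype.card ι) ↔
      (∀ i j, M i j = 1 / √(Fintype.card ι)) ∧ (∀ i, X i = 1 / √(Fintype.card ι)) ∧
        ∀ j, Y j = 1 / √(Fintype.card ι) := by
  set s := √(Fintype.card ι)
  have hMsum : ∑ i, ∑ j, M i j ^ 2 = s ^ 2 := by simp [s, hrow]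
  constructor
  · intro h
    have hrank := eq_mul_mul_of_sum_sum_mul_mul_eq M X Y hMsum hX hY h
    have hsX : ∀ i, s * X i = 1 := fun i =>
      eq_one_of_sum_sq_mul_eq_one (mul_nonneg (Real.sqrt_nonneg _) (hX₀ i)) hY
        (by simpa only [hrank] using hrow i)
    have hsY : ∀ j, s * Y j = 1 := fun j =>
      eq_one_of_sum_sq_mul_eq_one (mul_nonneg (Real.sqrt_nonneg _) (hY₀ j)) hX
        (by simpa only [hrank, mul_right_comm s] using hcol j)
    refine ⟨fun i j => ?_, fun i => eq_one_div_of_mul_eq_one_right (hsX i),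
      fun j => eq_one_div_of_mul_eq_one_right (hsY j)⟩
    rw [hrank, hsX, one_mul, eq_one_div_of_mul_eq_one_right (hsY j)]
  · rintro ⟨hM, hX', hY'⟩
    -- Every factor equals `1 / s`, so each term is `M i j ^ 2 / s`.
    calc ∑ i, ∑ j, M i j * X i * Y j = (∑ i, ∑ j, M i j ^ 2) / s := by
          simp only [Finset.sum_div]
          refine Finset.sum_congr rfl fun i _ => Finset.sum_congr rfl fun j _ => ?_
          rw [hX' i, hY' j, hM i j]
          ring
      _ = s := by rw [hMsum, sq, mul_self_div_self]

end RankOne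

theorem stmt11_general (d : ℕ)
    (a f : OrthonormalBasis (Fin d) ℂ (EuclideanSpace ℂ (Fin d)))
    (ψ : EuclideanSpace ℂ (Fin d)) (hψ : ‖ψ‖ = 1) :
    (∑ i, ∑ j, ‖⟪f j, a i⟫‖ * ‖⟪a i, ψ⟫‖ * ‖⟪ψ, f j⟫‖) = Real.sqrt d ↔
      (∀ i j, ‖⟪f j, a i⟫‖ = 1 / Real.sqrt d) ∧
        (∀ i, ‖⟪a i, ψ⟫‖ = 1 / Real.sqrt d) ∧
        (∀ j, ‖⟪f j, ψ⟫‖ = 1 / Real.sqrt d) := by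
  have key := sum_sum_mul_mul_eq_sqrt_card_iff (fun i j => ‖⟪f j, a i⟫‖) (fun i => ‖⟪a i, ψ⟫‖)
    (fun j => ‖⟪ψ, f j⟫‖) (fun _ => norm_nonneg _) (fun _ => norm_nonneg _)
    (fun i => by simp [f.sum_sq_norm_inner_right (a i), a.orthonormal.1 i])
    (fun j => by simp [a.sum_sq_norm_inner_left (f j), f.orthonormal.1 j])
    (by simp [a.sum_sq_norm_inner_right ψ, hψ]) (by simp [f.sum_sq_norm_inner_left ψ, hψ])
  simpa only [Fintype.card_fin, norm_inner_symm ψ] using key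

theorem stmt11 (d : ℕ) (hd : 0 < d)
    (a f : OrthonormalBasis (Fin d) ℂ (EuclideanSpace ℂ (Fin d)))
    (ψ : EuclideanSpace ℂ (Fin d)) (hψ : ‖ψ‖ = 1) :
    (∑ i, ∑ j, ‖⟪f j, a i⟫‖ * ‖⟪a i, ψ⟫‖ * ‖⟪ψ, f j⟫‖) = Real.sqrt d ↔
      (∀ i j, ‖⟪f j, a i⟫‖ = 1 / Real.sqrt d) ∧
        (∀ i, ‖⟪a i, ψ⟫‖ = 1 / Real.sqrt d) ∧
        (∀ j, ‖⟪f j, ψ⟫‖ = 1 / Real.sqrt d) :=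
  stmt11_general d a f ψ hψ
end

section
/- Let {a_{i_1}^{(1)}}, ..., {a_{i_k}^{(k)}} be orthonormal bases of ℂ^d and ψ a unit vector. Then Σ over all multi-indices (i_1,...,i_k) of |⟨a^{(1)}_{i_1}|a^{(2)}_{i_2}⟩ · ⟨a^{(2)}_{i_2}|a^{(3)}_{i_3}⟩ ⋯ ⟨a^{(k)}_{i_k}|ψ⟩⟨ψ|a^{(1)}_{i_1}⟩| ≤ d^{(k−1)/2}. Equivalently the extended KD nonclassicality satisfies 𝒩 ≤ d^{(k−1)/2} − 1. -/
open scoped InnerProductSpace BigOperators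

local notation "⟪" x ", " y "⟫" => @inner ℂ _ _ x y

/-- the chain vector: `chain d c w n i = ∑ paths of length n starting at i`,
weights `c`, terminal weight `w`. -/
def kdChain (d : ℕ) : (ℕ → Fin d → Fin d → ℝ) → (Fin d → ℝ) → ℕ → Fin d → ℝ
  | _, w, 0, i => w i
  | c, w, (n+1), i => ∑ i', c 0 i i' * kdChain d (fun m => c (m+1)) w n i'

lemma kdChain_sum (d : ℕ) (n : ℕ) (c : ℕ → Fin d → Fin d → ℝ) (w u : Fin d → ℝ) :
    ∑ j : Fin (n+1) → Fin d,
      (∏ m ∈ Finset.range n,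
        c m (j ⟨m % (n+1), Nat.mod_lt m n.succ_pos⟩) (j ⟨(m+1) % (n+1), Nat.mod_lt _ n.succ_pos⟩))
        * w (j ⟨n % (n+1), Nat.mod_lt _ n.succ_pos⟩) * u (j ⟨0 % (n+1), Nat.mod_lt _ n.succ_pos⟩)
    = ∑ i, u i * kdChain d c w n i := by
  induction n generalizing c u with
  | zero =>
      rw [← (Equiv.funUnique (Fin 1) (Fin d)).symm.sum_comp]
      simp [kdChain, mul_comm]
  | succ n ih =>
      rw [← (Fin.consEquiv (fun _ : Fin (n+2) => Fin d)).sum_comp]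
      rw [Fintype.sum_prod_type]
      have key : ∀ i : Fin d, ∀ j : Fin (n+1) → Fin d,
          (∏ m ∈ Finset.range (n+1),
            c m ((Fin.cons i j : Fin (n+2) → Fin d) ⟨m % (n+2), Nat.mod_lt m (n+1).succ_pos⟩)
              ((Fin.cons i j : Fin (n+2) → Fin d) ⟨(m+1) % (n+2), Nat.mod_lt _ (n+1).succ_pos⟩))
            * w ((Fin.cons i j : Fin (n+2) → Fin d) ⟨(n+1) % (n+2), Nat.mod_lt _ (n+1).succ_pos⟩)
            * u ((Fin.cons i j : Fin (n+2) → Fin d) ⟨0 % (n+2), Nat.mod_lt _ (n+1).succ_pos⟩)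
          = u i * ((∏ m ∈ Finset.range n,
              (fun m' => c (m'+1)) m (j ⟨m % (n+1), Nat.mod_lt m n.succ_pos⟩)
                (j ⟨(m+1) % (n+1), Nat.mod_lt _ n.succ_pos⟩))
              * w (j ⟨n % (n+1), Nat.mod_lt _ n.succ_pos⟩)
              * (fun i' => c 0 i i') (j ⟨0 % (n+1), Nat.mod_lt _ n.succ_pos⟩)) := by
        intro i j
        have hcons0 : (Fin.cons i j : Fin (n+2) → Fin d) ⟨0 % (n+2), Nat.mod_lt _ (n+1).succ_pos⟩ = i := by
          have : (⟨0 % (n+2), Nat.mod_lt _ (n+1).succ_pos⟩ : Fin (n+2)) = 0 := by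
            ext; simp
          rw [this, Fin.cons_zero]
        have hconss : ∀ (m : ℕ) (h : m < n + 1),
            (Fin.cons i j : Fin (n+2) → Fin d) ⟨(m+1) % (n+2), Nat.mod_lt _ (n+1).succ_pos⟩
              = j ⟨m % (n+1), Nat.mod_lt m n.succ_pos⟩ := by
          intro m h
          have h1 : (⟨(m+1) % (n+2), Nat.mod_lt _ (n+1).succ_pos⟩ : Fin (n+2))
              = Fin.succ ⟨m % (n+1), Nat.mod_lt m n.succ_pos⟩ := by
            ext
            simp [Nat.mod_eq_of_lt, h, Nat.lt_succ_of_lt h, Fin.succ]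
          rw [h1, Fin.cons_succ]
        rw [Finset.prod_range_succ']
        rw [hcons0, hconss n n.lt_succ_self]
        have hprod : ∀ m ∈ Finset.range n,
            c (m+1) ((Fin.cons i j : Fin (n+2) → Fin d) ⟨(m+1) % (n+2), Nat.mod_lt _ (n+1).succ_pos⟩)
              ((Fin.cons i j : Fin (n+2) → Fin d) ⟨(m+1+1) % (n+2), Nat.mod_lt _ (n+1).succ_pos⟩)
            = c (m+1) (j ⟨m % (n+1), Nat.mod_lt m n.succ_pos⟩)
                (j ⟨(m+1) % (n+1), Nat.mod_lt _ n.succ_pos⟩) := by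
          intro m hm
          rw [Finset.mem_range] at hm
          rw [hconss m (by omega), hconss (m+1) (by omega)]
        rw [Finset.prod_congr rfl hprod]
        have hc0 : (Fin.cons i j : Fin (n+2) → Fin d) ⟨(0+1) % (n+2), Nat.mod_lt _ (n+1).succ_pos⟩
            = j ⟨0 % (n+1), Nat.mod_lt 0 n.succ_pos⟩ := hconss 0 (by omega)
        rw [hc0]
        ring
      calc ∑ i, ∑ j : Fin (n+1) → Fin d, _ = ∑ i, ∑ j : Fin (n+1) → Fin d,
            u i * ((∏ m ∈ Finset.range n,
              (fun m' => c (m'+1)) m (j ⟨m % (n+1), Nat.mod_lt m n.succ_pos⟩)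
                (j ⟨(m+1) % (n+1), Nat.mod_lt _ n.succ_pos⟩))
              * w (j ⟨n % (n+1), Nat.mod_lt _ n.succ_pos⟩)
              * (fun i' => c 0 i i') (j ⟨0 % (n+1), Nat.mod_lt _ n.succ_pos⟩)) := by
            refine Finset.sum_congr rfl fun i _ => Finset.sum_congr rfl fun j _ => key i j
        _ = ∑ i, u i * kdChain d c w (n+1) i := by
            refine Finset.sum_congr rfl fun i _ => ?_
            rw [← Finset.mul_sum, ih (fun m' => c (m'+1)) (fun i' => c 0 i i')]
            rfl

lemma kdChain_sq_le (d : ℕ) (n : ℕ) (c : ℕ → Fin d → Fin d → ℝ)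
    (hc : ∀ m i, ∑ i', (c m i i')^2 ≤ 1) (w : Fin d → ℝ) :
    ∑ i, (kdChain d c w n i)^2 ≤ (d:ℝ)^n * ∑ i, (w i)^2 := by
  induction n generalizing c with
  | zero => simp [kdChain]
  | succ n ih =>
      have hw : (0:ℝ) ≤ ∑ i, (kdChain d (fun m => c (m+1)) w n i)^2 :=
        Finset.sum_nonneg fun _ _ => sq_nonneg _
      calc ∑ i, (kdChain d c w (n+1) i)^2
          ≤ ∑ i : Fin d, (∑ i', (c 0 i i')^2) * ∑ i', (kdChain d (fun m => c (m+1)) w n i')^2 :=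
            Finset.sum_le_sum fun i _ =>
              Finset.sum_mul_sq_le_sq_mul_sq _ _ _
        _ ≤ ∑ i : Fin d, 1 * ∑ i', (kdChain d (fun m => c (m+1)) w n i')^2 :=
            Finset.sum_le_sum fun i _ => mul_le_mul_of_nonneg_right (hc 0 i) hw
        _ = (d:ℝ) * ∑ i', (kdChain d (fun m => c (m+1)) w n i')^2 := by
            simp [Finset.sum_const, mul_comm]
        _ ≤ (d:ℝ) * ((d:ℝ)^n * ∑ i, (w i)^2) := by
            refine mul_le_mul_of_nonneg_left (ih _ fun m i => hc (m+1) i) (by positivity)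
        _ = (d:ℝ)^(n+1) * ∑ i, (w i)^2 := by ring

/-- Theorem 2 (inequality part) of arXiv:2009.04468: the extended KD distribution over
`k` orthonormal bases of `ℂ^d` satisfies `∑ |q| ≤ d^((k-1)/2)`.  The multi-index
`(i_1, …, i_k)` is encoded as a function `j : Fin k → Fin d`, accessed through
`i m := j ⟨m % k, _⟩` (which equals `j m` for `m < k`). -/
theorem stmt12 (d k : ℕ) (hk : 0 < k)
    (a : ℕ → OrthonormalBasis (Fin d) ℂ (EuclideanSpace ℂ (Fin d)))
    (ψ : EuclideanSpace ℂ (Fin d)) (hψ : ‖ψ‖ = 1) :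
    (∑ j : Fin k → Fin d,
        ‖(∏ m ∈ Finset.range (k - 1),
            ⟪a m (j ⟨m % k, Nat.mod_lt m hk⟩), a (m + 1) (j ⟨(m + 1) % k, Nat.mod_lt _ hk⟩)⟫) *
          ⟪a (k - 1) (j ⟨(k - 1) % k, Nat.mod_lt _ hk⟩), ψ⟫ *
          ⟪ψ, a 0 (j ⟨0 % k, Nat.mod_lt _ hk⟩)⟫‖)
      ≤ (d : ℝ) ^ (((k : ℝ) - 1) / 2) := by
  obtain ⟨n, rfl⟩ : ∃ n, k = n + 1 := ⟨k - 1, (Nat.succ_pred_eq_of_pos hk).symm⟩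
  set c : ℕ → Fin d → Fin d → ℝ := fun m i i' => ‖⟪a m i, a (m+1) i'⟫‖ with hc
  set w : Fin d → ℝ := fun i => ‖⟪a n i, ψ⟫‖ with hwdef
  set u : Fin d → ℝ := fun i => ‖⟪ψ, a 0 i⟫‖ with hudef
  have hsimp : n + 1 - 1 = n := rfl
  have step1 : (∑ j : Fin (n+1) → Fin d,
        ‖(∏ m ∈ Finset.range (n + 1 - 1),
            ⟪a m (j ⟨m % (n+1), Nat.mod_lt m hk⟩), a (m + 1) (j ⟨(m + 1) % (n+1), Nat.mod_lt _ hk⟩)⟫) *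
          ⟪a (n + 1 - 1) (j ⟨(n + 1 - 1) % (n+1), Nat.mod_lt _ hk⟩), ψ⟫ *
          ⟪ψ, a 0 (j ⟨0 % (n+1), Nat.mod_lt _ hk⟩)⟫‖)
      = ∑ i, u i * kdChain d c w n i := by
    rw [← kdChain_sum d n c w u]
    refine Finset.sum_congr rfl fun j _ => ?_
    rw [norm_mul, norm_mul, norm_prod]
    rfl
  rw [step1]
  -- Bessel-type bounds
  have hbessel : ∀ (x : EuclideanSpace ℂ (Fin d)) (m : ℕ),
      ∑ i, ‖⟪a m i, x⟫‖^2 ≤ ‖x‖^2 := fun x m =>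
    (a m).orthonormal.sum_inner_products_le x
  have hcsq : ∀ m i, ∑ i', (c m i i')^2 ≤ 1 := by
    intro m i
    have h1 : ‖(a m) i‖ = 1 := (a m).orthonormal.1 i
    have h := hbessel (a m i) (m+1)
    rw [h1, one_pow] at h
    calc ∑ i', (c m i i')^2 = ∑ i', ‖⟪a (m+1) i', a m i⟫‖^2 :=
          Finset.sum_congr rfl fun i' _ => by
            rw [show c m i i' = ‖⟪a (m+1) i', a m i⟫‖ from norm_inner_symm _ _]
      _ ≤ 1 := h
  have hW : ∑ i, (w i)^2 ≤ 1 := by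
    have := hbessel ψ n
    simpa [hwdef, hψ] using this
  have hU : ∑ i, (u i)^2 ≤ 1 := by
    have := hbessel ψ 0
    have h2 : ∀ i : Fin d, ‖⟪ψ, a 0 i⟫‖ = ‖⟪a 0 i, ψ⟫‖ := fun i => norm_inner_symm _ _
    calc ∑ i, (u i)^2 = ∑ i, ‖⟪a 0 i, ψ⟫‖^2 :=
          Finset.sum_congr rfl fun i _ => by
            rw [show u i = ‖⟪a 0 i, ψ⟫‖ from norm_inner_symm _ _]
      _ ≤ 1 := by simpa [hψ] using this
  have hV : ∑ i, (kdChain d c w n i)^2 ≤ (d:ℝ)^n := by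
    calc ∑ i, (kdChain d c w n i)^2 ≤ (d:ℝ)^n * ∑ i, (w i)^2 := kdChain_sq_le d n c hcsq w
      _ ≤ (d:ℝ)^n * 1 := mul_le_mul_of_nonneg_left hW (by positivity)
      _ = (d:ℝ)^n := mul_one _
  calc ∑ i, u i * kdChain d c w n i
      ≤ Real.sqrt (∑ i, (u i)^2) * Real.sqrt (∑ i, (kdChain d c w n i)^2) :=
        Real.sum_mul_le_sqrt_mul_sqrt _ _ _
    _ ≤ Real.sqrt 1 * Real.sqrt ((d:ℝ)^n) := by
        gcongr
    _ = Real.sqrt ((d:ℝ)^n) := by rw [Real.sqrt_one, one_mul]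
    _ ≤ (d : ℝ) ^ ((((n+1:ℕ) : ℝ) - 1) / 2) := by
        have h1 : (((n+1:ℕ) : ℝ) - 1) = (n:ℝ) := by push_cast; ring
        rw [h1, Real.sqrt_eq_rpow, ← Real.rpow_natCast (d:ℝ) n,
          ← Real.rpow_mul (Nat.cast_nonneg d)]
        apply le_of_eq
        congr 1
        ring
end

section
/- Suppose A is a nondegenerate Hermitian operator with eigenbasis {a_i} on ℂ^d, F is Hermitian with spectral projectors F_k (at least two distinct ones, i.e., F is not a multiple of the identity), and ψ is a unit vector. If all coarse-grained KD quasiprobabilities Q_{ik} = ⟨ψ|F_k|a_i⟩⟨a_i|ψ⟩ are nonzero nonnegative reals, we obtain a contradiction; hence if all Q_{ik} are nonnegative reals, some Q_{ik} = 0. -/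
/-!
If every `Q i k = ⟪ψ, F k (a i)⟫ * ⟪a i, ψ⟫` were a positive real, then for `k₁ ≠ k₂` each term
`⟪F k₁ ψ, a i⟫ * ⟪a i, F k₂ ψ⟫ = Q i k₁ * Q i k₂ / |⟪a i, ψ⟫|²` of the expansion of
`⟪F k₁ ψ, F k₂ ψ⟫` in the basis `a` would be positive, so `F k₁ ψ` and `F k₂ ψ` could not be
orthogonal; but `F k₁ ∘ F k₂ = 0` makes them orthogonal.
-/

open scoped InnerProductSpace ComplexOrder
open ComplexConjugate

local notation "⟪" x ", " y "⟫" => @inner ℂ _ _ x y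

theorem Complex.mul_conj_pos_of_mul_pos {p q c : ℂ} (hp : 0 < p * c) (hq : 0 < q * c) :
    0 < p * conj q := by
  have hc : c ≠ 0 := by rintro rfl; simp at hp
  have hnormSq : (0 : ℂ) < ((Complex.normSq c)⁻¹ : ℝ) :=
    Complex.zero_lt_real.mpr (inv_pos.mpr (Complex.normSq_pos.mpr hc))
  have hexpand : p * conj q = (p * c) * conj (q * c) * ((Complex.normSq c)⁻¹ : ℝ) := by
    have hc' : conj c ≠ 0 := (map_ne_zero _).mpr hc
    rw [map_mul, Complex.ofReal_inv, Complex.normSq_eq_conj_mul_self]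
    field_simp
  rw [hexpand, (IsSelfAdjoint.of_nonneg hq.le).conj_eq]
  exact mul_pos (mul_pos hp hq) hnormSq

theorem OrthonormalBasis.inner_pos_of_forall_inner_mul_inner_pos
    {E ι : Type*} [NormedAddCommGroup E] [InnerProductSpace ℂ E] [Fintype ι] [Nonempty ι]
    (b : OrthonormalBasis ι ℂ E) {u v : E} (h : ∀ i, 0 < ⟪u, b i⟫ * ⟪b i, v⟫) :
    0 < ⟪u, v⟫ := by
  rw [← b.sum_inner_mul_inner]
  exact Finset.sum_pos (fun i _ => h i) Finset.univ_nonempty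

theorem LinearMap.IsSymmetric.inner_map_map_eq_zero_of_comp_eq_zero
    {E : Type*} [NormedAddCommGroup E] [InnerProductSpace ℂ E] {S T : E →ₗ[ℂ] E}
    (hS : S.IsSymmetric) (hST : S ∘ₗ T = 0) (x y : E) : ⟪S x, T y⟫ = 0 := by
  rw [hS, ← LinearMap.comp_apply, hST, LinearMap.zero_apply, inner_zero_right]

theorem stmt18_general (d : ℕ) {ι : Type*} [Fintype ι]
    (k₁ k₂ : ι) (hk : k₁ ≠ k₂)
    (a : OrthonormalBasis (Fin d) ℂ (EuclideanSpace ℂ (Fin d)))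
    (F : ι → (EuclideanSpace ℂ (Fin d) →ₗ[ℂ] EuclideanSpace ℂ (Fin d)))
    (hsym : ∀ k, LinearMap.IsSymmetric (F k))
    (horth : ∀ k l, k ≠ l → F k ∘ₗ F l = 0)
    (ψ : EuclideanSpace ℂ (Fin d)) (hψ : ‖ψ‖ = 1)
    (hclassical : ∀ i k, 0 ≤ ⟪ψ, F k (a i)⟫ * ⟪a i, ψ⟫) :
    ∃ i k, ⟪ψ, F k (a i)⟫ * ⟪a i, ψ⟫ = 0 := by
  by_contra! hnonzero
  have hQ_pos (i : Fin d) (k : ι) : 0 < ⟪ψ, F k (a i)⟫ * ⟪a i, ψ⟫ :=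
    (hclassical i k).lt_of_ne (hnonzero i k).symm
  have : Nontrivial (EuclideanSpace ℂ (Fin d)) := nontrivial_of_ne ψ 0 (by rintro rfl; simp at hψ)
  have : Nonempty (Fin d) := a.toBasis.index_nonempty
  have hterm_pos (i : Fin d) : 0 < ⟪F k₁ ψ, a i⟫ * ⟪a i, F k₂ ψ⟫ := by
    rw [hsym k₁, ← inner_conj_symm (a i), hsym k₂]
    exact Complex.mul_conj_pos_of_mul_pos (hQ_pos i k₁) (hQ_pos i k₂)
  have horthogonal : ⟪F k₁ ψ, F k₂ ψ⟫ = 0 :=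
    (hsym k₁).inner_map_map_eq_zero_of_comp_eq_zero (horth k₁ k₂ hk) ψ ψ
  exact (a.inner_pos_of_forall_inner_mul_inner_pos hterm_pos).ne' horthogonal

theorem stmt18 (d : ℕ) {ι : Type*} [Fintype ι]
    (k₁ k₂ : ι) (hk : k₁ ≠ k₂)
    (a : OrthonormalBasis (Fin d) ℂ (EuclideanSpace ℂ (Fin d)))
    (F : ι → (EuclideanSpace ℂ (Fin d) →ₗ[ℂ] EuclideanSpace ℂ (Fin d)))
    (hsym : ∀ k, LinearMap.IsSymmetric (F k))
    (hproj : ∀ k, F k ∘ₗ F k = F k)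
    (horth : ∀ k l, k ≠ l → F k ∘ₗ F l = 0)
    (hsum : ∑ k, F k = LinearMap.id)
    (ψ : EuclideanSpace ℂ (Fin d)) (hψ : ‖ψ‖ = 1)
    (hclassical : ∀ i k, 0 ≤ ⟪ψ, F k (a i)⟫ * ⟪a i, ψ⟫) :
    ∃ i k, ⟪ψ, F k (a i)⟫ * ⟪a i, ψ⟫ = 0 :=
  stmt18_general d k₁ k₂ hk a F hsym horth ψ hψ hclassical
end
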